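/- arXiv:2012.14300 — 2 statements merged into one kernel-verified Lean document; each statement's English description precedes it below -/
import Mathlib

section
/- Let G be an infinite, connected, locally finite graph with exactly two ends whose automorphism group is almost transitive (finitely many vertex orbits), and fix the two ends. For every vertex v lying in some minimum separator separating the two ends, there is a unique 'leftmost' minimum separator S_v containing v: for every minimum separator S separating the two ends with v ∈ S, the left infinite side (S_v)^L of S_v is contained in the left infinite side S^L of S. -/
/-!
Two minimum separators `S`, `S'` through `v` can be uncrossed: the set
`(S ∩ S') ∪ (S ∩ S'^L) ∪ (S' ∩ S^L)` separates the ends and its left side lies in `S^L ∩ S'^L`;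
its mirror image, built from the right sides, also separates, meets it in `S ∩ S'` and
together with it lies in `S ∪ S'`, so by submodularity of cardinality both are minimum.
Only finitely many minimum separators pass through `v`: along a non-principal ultrafilter on
an infinite family of them, the vertices lying in almost all members form a set `A` of size at
most `k`; a path avoiding `A` between the neighbours of `v` that are almost always on the left,
resp. on the right, would avoid almost all members, so `A` separates and equals almost all
members. Hence some member has an inclusion-minimal left side, uncrossing makes it the least
one, and it is unique since a minimum separator consists of the vertices outside its left side
with a neighbour in it.
-/

open SimpleGraph

/-- The automorphism group of `G`, as a subgroup of the symmetric group on the vertices. -/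
def autGroup {V : Type*} (G : SimpleGraph V) : Subgroup (Equiv.Perm V) where
  carrier := {σ | ∀ a b, G.Adj (σ a) (σ b) ↔ G.Adj a b}
  one_mem' := fun _ _ => Iff.rfl
  mul_mem' := by
    intro σ τ hσ hτ a b
    rw [Equiv.Perm.mul_apply, Equiv.Perm.mul_apply]
    exact (hσ _ _).trans (hτ _ _)
  inv_mem' := by
    intro σ hσ a b
    rw [← hσ (σ⁻¹ a) (σ⁻¹ b), Equiv.Perm.inv_def, Equiv.apply_symm_apply, Equiv.apply_symm_apply]


open Opposite

open Filter

namespace Ultrafilter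

variable {ι V : Type*}

def limSet (U : Ultrafilter ι) (S : ι → Finset V) : Set V :=
  {u | ∀ᶠ i in U, u ∈ S i}

variable {U : Ultrafilter ι} {S : ι → Finset V}

theorem eventually_subset_of_coe_subset_limSet {t : Finset V} (ht : ↑t ⊆ U.limSet S) :
    ∀ᶠ i in U, t ⊆ S i :=
  (eventually_all_finset t).2 fun _ hu => ht hu

theorem finite_limSet {k : ℕ} (hk : ∀ i, (S i).card ≤ k) : (U.limSet S).Finite := by
  by_contra hinf
  obtain ⟨t, ht, htk⟩ := Set.Infinite.exists_subset_card_eq hinf (k + 1)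
  obtain ⟨i, hi⟩ := (eventually_subset_of_coe_subset_limSet ht).exists
  have := (Finset.card_le_card hi).trans (hk i)
  omega

theorem eventually_disjoint_of_disjoint_limSet {P : Finset V}
    (hP : Disjoint (P : Set V) (U.limSet S)) : ∀ᶠ i in U, Disjoint P (S i) := by
  have hnot : ∀ u ∈ P, ∀ᶠ i in U, u ∉ S i := fun u hu =>
    U.eventually_not.2 (Set.disjoint_left.1 hP hu)
  filter_upwards [(eventually_all_finset P).2 hnot] with i hi
  exact Finset.disjoint_left.2 hi

end Ultrafilter

namespace SimpleGraph.ComponentCompl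

variable {V : Type*} {G : SimpleGraph V} {K : Set V} {C : G.ComponentCompl K}

theorem exists_walk_of_mem_supp {a b : V} (ha : a ∈ C.supp) (hb : b ∈ C.supp) :
    ∃ p : G.Walk a b, ∀ x ∈ p.support, x ∉ K := by
  obtain ⟨ha', rfl⟩ := ha
  obtain ⟨hb', hba⟩ := hb
  obtain ⟨p⟩ := ConnectedComponent.exact hba.symm
  refine ⟨p.map (Embedding.induce _).toHom, ?_⟩
  intro x hx
  obtain ⟨y, -, rfl⟩ := List.mem_map.mp (Walk.support_map _ p ▸ hx)
  exact y.prop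

theorem mem_supp_of_walk {a b : V} (ha : a ∈ C.supp) (p : G.Walk a b)
    (hp : ∀ x ∈ p.support, x ∉ K) : b ∈ C.supp := by
  induction p with
  | nil => exact ha
  | cons hadj q ih =>
    refine ih (mem_of_adj _ _ ha (hp _ (by simp)) hadj) fun x hx => hp x (by simp [hx])

theorem supp_subset_of_adj_closed {X : Set V} {a : V} (ha : a ∈ C.supp) (haX : a ∈ X)
    (hX : ∀ x y, x ∈ X → G.Adj x y → y ∉ K → y ∈ X) : C.supp ⊆ X := by
  intro u hu
  by_contra huX
  obtain ⟨p, hp⟩ := exists_walk_of_mem_supp ha hu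
  obtain ⟨d, hd, hfst, hsnd⟩ := p.exists_boundary_dart X haX huX
  exact hsnd (hX _ _ hfst d.adj (hp _ (p.dart_snd_mem_support_of_mem_darts hd)))

end SimpleGraph.ComponentCompl

namespace SimpleGraph

open CategoryTheory

variable {V : Type*} {G : SimpleGraph V} {e e' : ∀ K : (Finset V)ᵒᵖ, G.componentComplFunctor.obj K}
  {S S' : Finset V} {k : ℕ}

theorem end_supp_anti (he : e ∈ G.end) (h : S ⊆ S') : (e (op S')).supp ⊆ (e (op S)).supp := by
  rw [← he (opHomOfLE h)]
  exact ComponentCompl.subset_hom _ (Finset.coe_subset.2 h)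

theorem disjoint_end_supp (h : e (op S) ≠ e' (op S)) :
    Disjoint (e (op S)).supp (e' (op S)).supp :=
  ComponentCompl.pairwise_disjoint h

theorem exists_adj_mem_end_supp_of_minimum (he : e ∈ G.end) (he' : e' ∈ G.end)
    (hmin : ∀ S : Finset V, e (op S) ≠ e' (op S) → k ≤ S.card) (hS : S.card = k)
    (hsep : e (op S) ≠ e' (op S)) {u : V} (hu : u ∈ S) :
    ∃ w, G.Adj u w ∧ w ∈ (e (op S)).supp := by
  classical
  by_contra! hno
  have hcollapse : e (op (S.erase u)) = e' (op (S.erase u)) := by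
    by_contra hsep'
    have := hmin _ hsep'
    rw [Finset.card_erase_of_mem hu] at this
    have := Finset.card_pos.2 ⟨u, hu⟩
    omega
  obtain ⟨a, ha⟩ := (e (op S)).nonempty
  obtain ⟨b, hb⟩ := (e' (op S)).nonempty
  -- if `u` has no neighbour on the left of `S`, deleting it from `S` does not enlarge that side
  have hsub : (e (op (S.erase u))).supp ⊆ (e (op S)).supp :=
    ComponentCompl.supp_subset_of_adj_closed (end_supp_anti he (S.erase_subset u) ha) ha
      fun x y hx hxy hy => by
        by_cases hyu : y = u
        · exact absurd hx (hno x (hyu ▸ hxy.symm))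
        · exact ComponentCompl.mem_of_adj x y hx (by simpa [hyu] using hy) hxy
  exact Set.disjoint_left.1 (disjoint_end_supp hsep)
    (hsub (hcollapse ▸ end_supp_anti he' (S.erase_subset u) hb)) hb

theorem mem_iff_adj_end_supp_of_minimum (he : e ∈ G.end) (he' : e' ∈ G.end)
    (hmin : ∀ S : Finset V, e (op S) ≠ e' (op S) → k ≤ S.card) (hS : S.card = k)
    (hsep : e (op S) ≠ e' (op S)) {u : V} :
    u ∈ S ↔ u ∉ (e (op S)).supp ∧ ∃ w, G.Adj u w ∧ w ∈ (e (op S)).supp := by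
  refine ⟨fun hu => ⟨fun h => ComponentCompl.notMem_of_mem h hu,
    exists_adj_mem_end_supp_of_minimum he he' hmin hS hsep hu⟩, ?_⟩
  rintro ⟨hu, w, hadj, hw⟩
  by_contra huS
  exact hu (ComponentCompl.mem_of_adj w u hw huS hadj.symm)

theorem eq_of_end_supp_eq_of_minimum (he : e ∈ G.end) (he' : e' ∈ G.end)
    (hmin : ∀ S : Finset V, e (op S) ≠ e' (op S) → k ≤ S.card)
    (hS : S.card = k) (hsep : e (op S) ≠ e' (op S))
    (hS' : S'.card = k) (hsep' : e (op S') ≠ e' (op S'))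
    (h : (e (op S)).supp = (e (op S')).supp) : S = S' := by
  ext u
  rw [mem_iff_adj_end_supp_of_minimum he he' hmin hS hsep,
    mem_iff_adj_end_supp_of_minimum he he' hmin hS' hsep', h]

section Uncross

variable [DecidableEq V]

-- With `e` the left end this is the paper's `S^∩`; with the right end, its mirror image.
open Classical in
noncomputable def uncross (e : ∀ K : (Finset V)ᵒᵖ, G.componentComplFunctor.obj K)
    (S S' : Finset V) : Finset V :=
  S ∩ S' ∪ {x ∈ S | x ∈ (e (op S')).supp} ∪ {x ∈ S' | x ∈ (e (op S)).supp}

theorem mem_uncross {x : V} :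
    x ∈ uncross e S S' ↔ x ∈ S ∧ x ∈ S' ∨ x ∈ S ∧ x ∈ (e (op S')).supp ∨
      x ∈ S' ∧ x ∈ (e (op S)).supp := by
  simp [uncross]

theorem uncross_subset_union : uncross e S S' ⊆ S ∪ S' := by
  intro x hx
  rcases mem_uncross.1 hx with h | h | h <;> simp [h.1]

theorem uncross_inter_uncross (hsep : e (op S) ≠ e' (op S)) (hsep' : e (op S') ≠ e' (op S')) :
    uncross e S S' ∩ uncross e' S S' = S ∩ S' := by
  have hL := Set.disjoint_left.1 (disjoint_end_supp hsep)
  have hL' := Set.disjoint_left.1 (disjoint_end_supp hsep')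
  ext x
  simp only [Finset.mem_inter, mem_uncross]
  constructor
  · rintro ⟨h | h | h, g | g | g⟩ <;> first
      | exact h | exact g | exact ⟨h.1, g.1⟩ | exact ⟨g.1, h.1⟩
      | exact absurd g.2 (hL' h.2) | exact absurd g.2 (hL h.2)
  · exact fun h => ⟨Or.inl h, Or.inl h⟩

theorem card_uncross_add_card_uncross_le (hsep : e (op S) ≠ e' (op S))
    (hsep' : e (op S') ≠ e' (op S')) :
    (uncross e S S').card + (uncross e' S S').card ≤ S.card + S'.card := by
  rw [← Finset.card_union_add_card_inter, ← Finset.card_union_add_card_inter S,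
    uncross_inter_uncross hsep hsep']
  exact Nat.add_le_add_right
    (Finset.card_le_card (Finset.union_subset uncross_subset_union uncross_subset_union)) _

theorem end_supp_uncross_subset (he : e ∈ G.end) :
    (e (op (uncross e S S'))).supp ⊆ (e (op S)).supp ∩ (e (op S')).supp := by
  obtain ⟨a, ha⟩ := (e (op (S ∪ S'))).nonempty
  refine ComponentCompl.supp_subset_of_adj_closed (end_supp_anti he uncross_subset_union ha)
    ⟨end_supp_anti he Finset.subset_union_left ha, end_supp_anti he Finset.subset_union_right ha⟩
    ?_
  rintro x y ⟨hxL, hxL'⟩ hxy hy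
  simp only [Finset.mem_coe, mem_uncross, not_or, not_and] at hy
  have hyL : y ∈ (e (op S)).supp := by
    by_contra hyL
    have hyS : y ∈ S := by_contra fun hyS => hyL (ComponentCompl.mem_of_adj x y hxL hyS hxy)
    exact hy.2.1 hyS (ComponentCompl.mem_of_adj x y hxL' (hy.1 hyS) hxy)
  refine ⟨hyL, by_contra fun hyL' => ?_⟩
  have hyS' : y ∈ S' := by_contra fun hyS' => hyL' (ComponentCompl.mem_of_adj x y hxL' hyS' hxy)
  exact hy.2.2 hyS' hyL

theorem end_uncross_ne (he : e ∈ G.end) (he' : e' ∈ G.end) (hsep : e (op S) ≠ e' (op S)) :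
    e (op (uncross e S S')) ≠ e' (op (uncross e S S')) := by
  intro h
  obtain ⟨b, hb⟩ := (e' (op (S ∪ S'))).nonempty
  have hbT : b ∈ (e (op (uncross e S S'))).supp := h ▸ end_supp_anti he' uncross_subset_union hb
  exact Set.disjoint_left.1 (disjoint_end_supp hsep) (end_supp_uncross_subset he hbT).1
    (end_supp_anti he' Finset.subset_union_left hb)

end Uncross

theorem exists_minimum_end_supp_subset_inter (he : e ∈ G.end) (he' : e' ∈ G.end)
    (hmin : ∀ S : Finset V, e (op S) ≠ e' (op S) → k ≤ S.card)
    (hS : S.card = k) (hsep : e (op S) ≠ e' (op S))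
    (hS' : S'.card = k) (hsep' : e (op S') ≠ e' (op S')) {v : V} (hv : v ∈ S) (hv' : v ∈ S') :
    ∃ T : Finset V, T.card = k ∧ e (op T) ≠ e' (op T) ∧ v ∈ T ∧
      (e (op T)).supp ⊆ (e (op S)).supp ∩ (e (op S')).supp := by
  classical
  have hT := hmin _ (end_uncross_ne (S' := S') he he' hsep)
  have hT' := hmin _ (end_uncross_ne (S' := S') he' he hsep.symm).symm
  have hsum := card_uncross_add_card_uncross_le hsep hsep'
  exact ⟨uncross e S S', by omega, end_uncross_ne he he' hsep, mem_uncross.2 (.inl ⟨hv, hv'⟩),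
    end_supp_uncross_subset he⟩

theorem end_ne_of_coe_eq_limSet {ι : Type*} {U : Ultrafilter ι} {S : ι → Finset V}
    {A : Finset V} (hA : ↑A = U.limSet S) (he : e ∈ G.end) (he' : e' ∈ G.end)
    (hsep : ∀ i, e (op (S i)) ≠ e' (op (S i))) {a b : V}
    (ha : ∀ᶠ i in U, a ∈ (e (op (S i))).supp) (hb : ∀ᶠ i in U, b ∈ (e' (op (S i))).supp) :
    e (op A) ≠ e' (op A) := by
  classical
  intro hAsep
  have hAS : ∀ᶠ i in U, A ⊆ S i := Ultrafilter.eventually_subset_of_coe_subset_limSet hA.le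
  obtain ⟨i, hAi, hai⟩ := (hAS.and ha).exists
  obtain ⟨j, hAj, hbj⟩ := (hAS.and hb).exists
  obtain ⟨p, hp⟩ := ComponentCompl.exists_walk_of_mem_supp (end_supp_anti he hAi hai)
    (hAsep ▸ end_supp_anti he' hAj hbj)
  have hpA : Disjoint (p.support.toFinset : Set V) (U.limSet S) := by
    rw [← hA, Finset.disjoint_coe]
    exact Finset.disjoint_left.2 fun x hx => hp x (List.mem_toFinset.1 hx)
  obtain ⟨i, hip, hia, hib⟩ :=
    ((Ultrafilter.eventually_disjoint_of_disjoint_limSet hpA).and (ha.and hb)).exists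
  refine Set.disjoint_left.1 (disjoint_end_supp (hsep i)) ?_ hib
  exact ComponentCompl.mem_supp_of_walk hia p fun x hx =>
    Finset.disjoint_left.1 hip (List.mem_toFinset.2 hx)

theorem finite_setOf_minimum_mem (hlf : ∀ v : V, (G.neighborSet v).Finite)
    (he : e ∈ G.end) (he' : e' ∈ G.end)
    (hmin : ∀ S : Finset V, e (op S) ≠ e' (op S) → k ≤ S.card) (v : V) :
    {S : Finset V | S.card = k ∧ e (op S) ≠ e' (op S) ∧ v ∈ S}.Finite := by
  set F := {S : Finset V | S.card = k ∧ e (op S) ≠ e' (op S) ∧ v ∈ S}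
  by_contra hfin
  have : Infinite F := Set.infinite_coe_iff.2 hfin
  let U : Ultrafilter F := hyperfilter F
  -- pigeonhole over the finitely many neighbours of `v`
  obtain ⟨a, -, ha⟩ : ∃ a ∈ G.neighborSet v, ∀ᶠ S : F in U, a ∈ (e (op S.1)).supp :=
    (U.eventually_exists_mem_iff (hlf v)).1 <| .of_forall fun S =>
      exists_adj_mem_end_supp_of_minimum he he' hmin S.2.1 S.2.2.1 S.2.2.2
  obtain ⟨b, -, hb⟩ : ∃ b ∈ G.neighborSet v, ∀ᶠ S : F in U, b ∈ (e' (op S.1)).supp :=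
    (U.eventually_exists_mem_iff (hlf v)).1 <| .of_forall fun S =>
      exists_adj_mem_end_supp_of_minimum he' he (fun S h => hmin S h.symm) S.2.1
        S.2.2.1.symm S.2.2.2
  have hAfin := U.finite_limSet (S := Subtype.val) fun S => S.2.1.le
  have hAsep := end_ne_of_coe_eq_limSet hAfin.coe_toFinset he he' (fun S => S.2.2.1) ha hb
  have hAeq : ∀ᶠ S : F in U, S.1 = hAfin.toFinset :=
    (Ultrafilter.eventually_subset_of_coe_subset_limSet hAfin.coe_toFinset.le).mono fun S hS =>
      (Finset.eq_of_subset_of_card_le hS (S.2.1 ▸ hmin _ hAsep)).symm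
  exact Set.Finite.notMem_hyperfilter
    (Set.Subsingleton.finite fun S hS S' hS' => Subtype.ext (hS.trans hS'.symm)) hAeq

end SimpleGraph

theorem stmt_15_general {V : Type*} (G : SimpleGraph V)
    (hlf : ∀ v : V, (G.neighborSet v).Finite)
    -- the two (distinct) ends, the first one being the `left` end
    (e e' : ∀ K : (Finset V)ᵒᵖ, G.componentComplFunctor.obj K)
    (he : e ∈ G.end) (he' : e' ∈ G.end)
    -- k is the connectivity between the two ends: the minimum size of a separator
    -- separating them
    (k : ℕ)
    (hmin : ∀ S : Finset V, e (op S) ≠ e' (op S) → k ≤ S.card) :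
    ∀ v : V, (∃ S : Finset V, S.card = k ∧ e (op S) ≠ e' (op S) ∧ v ∈ S) →
      ∃! Sv : Finset V, Sv.card = k ∧ e (op Sv) ≠ e' (op Sv) ∧ v ∈ Sv ∧
        ∀ S : Finset V, S.card = k → e (op S) ≠ e' (op S) → v ∈ S →
          (e (op Sv)).supp ⊆ (e (op S)).supp := by
  intro v hv
  obtain ⟨Sv, ⟨hSv, hsepv, hvSv⟩, hleast⟩ :=
    (finite_setOf_minimum_mem hlf he he' hmin v).exists_minimalFor (fun S => (e (op S)).supp) _ hv
  have hleftmost : ∀ S : Finset V, S.card = k → e (op S) ≠ e' (op S) → v ∈ S →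
      (e (op Sv)).supp ⊆ (e (op S)).supp := by
    intro S hS hsep hvS
    obtain ⟨T, hT, hsepT, hvT, hTsub⟩ :=
      exists_minimum_end_supp_subset_inter he he' hmin hSv hsepv hS hsep hvSv hvS
    exact (hleast ⟨hT, hsepT, hvT⟩ (hTsub.trans Set.inter_subset_left)).trans
      (hTsub.trans Set.inter_subset_right)
  refine ⟨Sv, ⟨hSv, hsepv, hvSv, hleftmost⟩, ?_⟩
  rintro S ⟨hS, hsep, hvS, hSleft⟩
  exact eq_of_end_supp_eq_of_minimum he he' hmin hS hsep hSv hsepv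
    ((hSleft Sv hSv hsepv hvSv).antisymm (hleftmost S hS hsep hvS))

/-- in an infinite, connected, locally finite graph with exactly two ends
whose automorphism group has finitely many vertex orbits, every vertex `v` lying in a
minimum separator separating the two ends admits a unique leftmost minimum separator
`S_v`: a minimum separator containing `v` whose left side is contained in the left side
of every minimum separator containing `v`. -/
theorem stmt_15 {V : Type*} [Infinite V] [DecidableEq V] (G : SimpleGraph V)
    (hconn : G.Connected)
    (hlf : ∀ v : V, (G.neighborSet v).Finite)
    (horb : {O : Set V | ∃ v : V, O = {w | ∃ σ ∈ autGroup G, σ v = w}}.Finite)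
    (hends : Nat.card G.end = 2)
    -- the two (distinct) ends, the first one being the `left` end
    (e e' : ∀ K : (Finset V)ᵒᵖ, G.componentComplFunctor.obj K)
    (he : e ∈ G.end) (he' : e' ∈ G.end) (hee : e ≠ e')
    -- k is the connectivity between the two ends: the minimum size of a separator
    -- separating them
    (k : ℕ)
    (hex : ∃ S : Finset V, S.card = k ∧ e (op S) ≠ e' (op S))
    (hmin : ∀ S : Finset V, e (op S) ≠ e' (op S) → k ≤ S.card) :
    ∀ v : V, (∃ S : Finset V, S.card = k ∧ e (op S) ≠ e' (op S) ∧ v ∈ S) →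
      ∃! Sv : Finset V, Sv.card = k ∧ e (op Sv) ≠ e' (op Sv) ∧ v ∈ Sv ∧
        ∀ S : Finset V, S.card = k → e (op S) ≠ e' (op S) → v ∈ S →
          (e (op Sv)).supp ⊆ (e (op S)).supp :=
  stmt_15_general G hlf e e' he he' k hmin
end

section
/- Let G be a finite connected graph, F ⊆ V(G), and let Z be a connected component of G − F with neighborhood N(Z) ⊆ F. Suppose Δ ≤ Aut(G) fixes Z setwise and fixes N(Z) pointwise, Δ has no fixed points in Z, and there is δ ∈ Δ whose restriction to Z has all orbits of length greater than h. If there exists a tree T in G[Z ∪ N(Z)] whose leaf set is exactly N(Z), which contains at most one vertex from each orbit of Δ on Z, and |N(Z)| ≥ h+1, then G contains K_{h+1,h+1}, and hence K_{h+1}, as a minor. -/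
open SimpleGraph

/-- `G` has a complete minor on `k` branch sets. -/
def HasCompleteMinor {V : Type*} (G : SimpleGraph V) (k : ℕ) : Prop :=
  ∃ B : Fin k → Set V,
    (∀ i, (B i).Nonempty) ∧
    (∀ i, (G.induce (B i)).Connected) ∧
    (∀ i j, i ≠ j → Disjoint (B i) (B j)) ∧
    (∀ i j, i ≠ j → ∃ a ∈ B i, ∃ b ∈ B j, G.Adj a b)

/-- `G` has a complete bipartite minor `K_{k,k}`. -/
def HasCompleteBipartiteMinor {V : Type*} (G : SimpleGraph V) (k : ℕ) : Prop :=
  ∃ B : Fin k ⊕ Fin k → Set V,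
    (∀ i, (B i).Nonempty) ∧
    (∀ i, (G.induce (B i)).Connected) ∧
    (∀ i j, i ≠ j → Disjoint (B i) (B j)) ∧
    (∀ i j, ∃ a ∈ B (Sum.inl i), ∃ b ∈ B (Sum.inr j), G.Adj a b)

/-- The (open) neighborhood of a set of vertices. -/
def setNbhd {V : Type*} (G : SimpleGraph V) (C : Set V) : Set V :=
  {v | v ∉ C ∧ ∃ w ∈ C, G.Adj v w}

/-! The interior `I = T.verts ∩ Z` of the tree is connected, since deleting leaves keeps a tree
connected, and the neighbour of each leaf lies in `I`. As `T` meets every `Δ`-orbit at most once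
and `δ` has no orbit of length `≤ h` on `Z`, the sets `I, δ I, …, δ^h I` are pairwise disjoint;
they are connected because `δ` is an automorphism, and adjacent to every leaf because `δ` fixes
`N(Z)`. With `h + 1` leaves as singletons they are the branch sets of a `K_{h+1,h+1}`, and
merging the two sides along a perfect matching gives a `K_{h+1}`.
If `I` is empty, `T` is a single edge `ab`, so `h ≤ 1`; for `h = 1` a path in `Z` between distinct
neighbours of `a` and `b` (one of them moved by `δ` if necessary) closes a cycle of length at
least four. -/

open Function

namespace SimpleGraph

variable {V : Type*} {G : SimpleGraph V}

def homOfMemAutGroup {σ : Equiv.Perm V} (hσ : σ ∈ autGroup G) : G →g G :=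
  ⟨σ, (hσ _ _).2⟩

lemma connected_induce_singleton (v : V) : (G.induce {v}).Connected := by
  rw [induce_singleton_eq_top]
  exact connected_top

lemma Connected.induce_image {W : Type*} {H : SimpleGraph W} (f : G →g H) {s : Set V}
    (hs : (G.induce s).Connected) : (H.induce (f '' s)).Connected :=
  hs.map (induceHom f (Set.mapsTo_image f s)) (Set.surjective_mapsTo_image_restrict f s)

lemma Reachable.mem_of_adj_closed {S : Set V} (hS : ∀ ⦃u v⦄, G.Adj u v → u ∈ S → v ∈ S)
    {u v : V} (huv : G.Reachable u v) (hu : u ∈ S) : v ∈ S := by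
  obtain ⟨p⟩ := huv
  induction p with
  | nil => exact hu
  | cons had _ ih => exact ih (hS had hu)

namespace Subgraph

variable {T : G.Subgraph} {Z : Set V}

lemma adj_of_neighborSet_eq_singleton {v w : V} (h : T.neighborSet v = {w}) : T.Adj v w := by
  rw [← mem_neighborSet, h]
  rfl

lemma neighborSet_eq_singleton_symm {u v w : V} (hv : T.neighborSet v = {w})
    (hw : T.neighborSet w = {u}) : T.neighborSet w = {v} := by
  have hvw : v ∈ T.neighborSet w := (adj_of_neighborSet_eq_singleton hv).symm
  rw [hw] at hvw ⊢
  rw [hvw]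

lemma Connected.verts_subset_pair (hT : T.Connected) {a b : V} (ha : a ∈ T.verts)
    (hab : T.neighborSet a = {b}) (hba : T.neighborSet b = {a}) : T.verts ⊆ {a, b} := by
  intro c hc
  refine (hT.coe ⟨a, ha⟩ ⟨c, hc⟩).mem_of_adj_closed (S := {x | x.val ∈ ({a, b} : Set V)}) ?_
    (by simp)
  rintro ⟨u, -⟩ ⟨v, -⟩ (huv : v ∈ T.neighborSet u) (rfl | rfl : u = a ∨ u = b) <;> simp_all

lemma Connected.exists_adj_verts_subset_pair (hT : T.Connected)
    (hleaf : ∀ v ∈ T.verts, ∃ w, T.neighborSet v = {w}) :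
    ∃ a b, T.Adj a b ∧ T.verts ⊆ {a, b} := by
  obtain ⟨a, ha⟩ := hT.nonempty
  obtain ⟨b, hab⟩ := hleaf a ha
  have hadj := adj_of_neighborSet_eq_singleton hab
  obtain ⟨u, hbu⟩ := hleaf b hadj.snd_mem
  exact ⟨a, b, hadj, hT.verts_subset_pair ha hab (neighborSet_eq_singleton_symm hab hbu)⟩

lemma Connected.connected_induce_verts_inter (hT : T.Connected)
    (hleaf : ∀ v ∈ T.verts, v ∉ Z → (T.neighborSet v).Subsingleton)
    (hZ : (T.verts ∩ Z).Nonempty) : (G.induce (T.verts ∩ Z)).Connected := by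
  have hpre : (T.coe.induce {x | x.val ∈ Z}).Preconnected :=
    hT.coe.preconnected.induce_of_degree_eq_one fun v hv _ hu _ hw =>
      Subtype.ext (hleaf v v.2 hv hu hw)
  refine (connected_iff _).2 ⟨hpre.map (induceHom T.hom fun x hx => ⟨x.2, hx⟩) ?_, hZ.to_subtype⟩
  rintro ⟨v, hvT, hvZ⟩
  exact ⟨⟨⟨v, hvT⟩, hvZ⟩, rfl⟩

lemma Connected.mem_of_neighborSet_eq_singleton (hT : T.Connected)
    (hleaf : ∀ v ∈ T.verts, v ∉ Z → ∃ w, T.neighborSet v = {w}) (hZ : (T.verts ∩ Z).Nonempty)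
    {v w : V} (hv : v ∉ Z) (hvw : T.neighborSet v = {w}) : w ∈ Z := by
  by_contra hw
  have hadj := adj_of_neighborSet_eq_singleton hvw
  obtain ⟨u, hwu⟩ := hleaf w hadj.snd_mem hw
  obtain ⟨x, hxT, hxZ⟩ := hZ
  rcases hT.verts_subset_pair hadj.fst_mem hvw (neighborSet_eq_singleton_symm hvw hwu) hxT
    with rfl | rfl
  exacts [hv hxZ, hw hxZ]

end Subgraph

end SimpleGraph

lemma Set.exists_injective_fin_of_le_ncard {α : Type*} {s : Set α} {n : ℕ} (hn : n ≤ s.ncard) :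
    ∃ f : Fin n → α, Injective f ∧ ∀ i, f i ∈ s := by
  rcases n.eq_zero_or_pos with rfl | hpos
  · exact ⟨Fin.elim0, fun i => i.elim0, fun i => i.elim0⟩
  obtain ⟨t, hts, htn⟩ := Set.exists_subset_card_eq hn
  have : Finite t := Set.finite_of_ncard_pos (htn ▸ hpos)
  let e : t ≃ Fin n :=
    (Finite.equivFin t).trans (finCongr (by rw [Nat.card_coe_set_eq, htn]))
  exact ⟨fun i => e.symm i, Subtype.val_injective.comp e.symm.injective, fun i => hts (e.symm i).2⟩

lemma Equiv.Perm.pairwise_disjoint_image_pow {α : Type*} {δ : Equiv.Perm α} {S : Set α} {h : ℕ}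
    (hS : ∀ v ∈ S, ∀ n, 0 < n → n ≤ h → (δ ^ n) v ∉ S) :
    Pairwise (_root_.Disjoint on fun i : Fin (h + 1) => (δ ^ (i : ℕ)) '' S) := by
  refine (pairwise_disjoint_on _).2 fun i j hij => Set.disjoint_left.2 ?_
  rintro _ ⟨x, hx, rfl⟩ ⟨y, hy, hyx⟩
  rw [Fin.lt_def] at hij
  have hshift : (δ ^ (i : ℕ)) ((δ ^ ((j : ℕ) - i)) y) = (δ ^ (i : ℕ)) x := by
    rw [← Equiv.Perm.mul_apply, ← pow_add, Nat.add_sub_cancel' hij.le, hyx]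
  exact hS y hy _ (by omega) (by omega) ((δ ^ (i : ℕ)).injective hshift ▸ hx)

section Minors

variable {V : Type*} {G : SimpleGraph V}

lemma HasCompleteBipartiteMinor.hasCompleteMinor {k : ℕ} (hG : HasCompleteBipartiteMinor G k) :
    HasCompleteMinor G k := by
  obtain ⟨B, hne, hconn, hdisj, hadj⟩ := hG
  refine ⟨fun i => B (.inl i) ∪ B (.inr i), fun i => (hne _).mono Set.subset_union_left,
    fun i => ?_, fun i j hij => ?_, fun i j _ => ?_⟩
  · obtain ⟨a, ha, b, hb, hab⟩ := hadj i i
    exact connected_induce_union (hconn _).preconnected (hconn _).preconnected ha hb hab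
  · simp only [Set.disjoint_union_left, Set.disjoint_union_right]
    exact ⟨⟨hdisj _ _ (by simpa using hij), hdisj _ _ Sum.inr_ne_inl⟩,
      hdisj _ _ Sum.inl_ne_inr, hdisj _ _ (by simpa using hij)⟩
  · obtain ⟨a, ha, b, hb, hab⟩ := hadj i j
    exact ⟨a, .inl ha, b, .inr hb, hab⟩

lemma hasCompleteBipartiteMinor_of_forall_adj {k : ℕ} (A : Fin k → Set V) (ℓ : Fin k → V)
    (hA : ∀ i, (G.induce (A i)).Connected) (hAdisj : Pairwise (Disjoint on A))
    (hℓ : Injective ℓ) (hℓA : ∀ i j, ℓ j ∉ A i)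
    (hadj : ∀ i j, ∃ a ∈ A i, G.Adj a (ℓ j)) : HasCompleteBipartiteMinor G k := by
  refine ⟨Sum.elim A fun j => {ℓ j}, ?_, ?_, ?_, fun i j => ?_⟩
  · rintro (i | j)
    exacts [Set.nonempty_coe_sort.1 (hA i).nonempty, Set.singleton_nonempty _]
  · rintro (i | j)
    exacts [hA i, connected_induce_singleton _]
  · rintro (i | i) (j | j) hij
    · exact hAdisj fun e => hij (congrArg _ e)
    · exact Set.disjoint_singleton_right.2 (hℓA i j)
    · exact Set.disjoint_singleton_left.2 (hℓA j i)
    · exact Set.disjoint_singleton.2 (hℓ.ne fun e => hij (congrArg _ e))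
  · obtain ⟨a, ha, hadj⟩ := hadj i j
    exact ⟨a, ha, ℓ j, rfl, hadj⟩

lemma hasCompleteBipartiteMinor_one_of_adj {a b : V} (hab : G.Adj a b) :
    HasCompleteBipartiteMinor G 1 :=
  hasCompleteBipartiteMinor_of_forall_adj (fun _ => {a}) (fun _ => b)
    (fun _ => connected_induce_singleton a) Subsingleton.pairwise
    (Function.injective_of_subsingleton _) (fun _ _ => hab.ne') (fun _ _ => ⟨a, rfl, hab⟩)

/-- A path `x ⋯ y` in `Z` closes the cycle `a x ⋯ y b a`, of length at least four. -/
lemma hasCompleteBipartiteMinor_two_of_connected_induce {Z : Set V} (hZ : (G.induce Z).Connected)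
    {a b x y : V} (ha : a ∉ Z) (hb : b ∉ Z) (hx : x ∈ Z) (hy : y ∈ Z) (hxy : x ≠ y)
    (hab : G.Adj a b) (hax : G.Adj a x) (hby : G.Adj b y) : HasCompleteBipartiteMinor G 2 := by
  obtain ⟨p, hp⟩ := (hZ ⟨x, hx⟩ ⟨y, hy⟩).exists_isPath
  have hq := hp.map (f := (Embedding.induce Z).toHom) Subtype.val_injective
  have hqZ : ∀ v ∈ (p.map (Embedding.induce Z).toHom).support, v ∈ Z := by
    simp only [Walk.support_map, List.mem_map]
    rintro v ⟨u, -, rfl⟩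
    exact u.2
  generalize p.map (Embedding.induce Z).toHom = q at hq hqZ
  cases q with
  | nil => exact absurd rfl hxy
  | cons hxz r =>
    rw [Walk.cons_isPath_iff] at hq
    have hrZ : ∀ v ∈ r.support, v ∈ Z := fun v hv => hqZ v (List.mem_cons_of_mem _ hv)
    have har : a ∉ r.support := fun h => ha (hrZ a h)
    have hbr : b ∉ r.support := fun h => hb (hrZ b h)
    refine hasCompleteBipartiteMinor_of_forall_adj ![{a}, {v | v ∈ r.support}] ![b, x] ?_
      ((pairwise_disjoint_on _).2 fun i j hij => ?_)
      (injective_pair_iff_ne.2 fun e => hb (e ▸ hx)) (fun i j => ?_) (fun i j => ?_)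
    · intro i
      fin_cases i
      exacts [connected_induce_singleton a, r.connected_induce_support]
    · fin_cases i <;> fin_cases j <;> simp_all
    · fin_cases i <;> fin_cases j <;> simp_all [hab.ne', hax.ne']
    · fin_cases i <;> fin_cases j
      exacts [⟨a, rfl, hab⟩, ⟨a, rfl, hax⟩, ⟨_, r.end_mem_support, hby.symm⟩,
        ⟨_, r.start_mem_support, hxz.symm⟩]

lemma hasCompleteBipartiteMinor_of_interior_nonempty {h : ℕ} {Z : Set V}
    {Δ : Subgroup (Equiv.Perm V)} (hΔ : Δ ≤ autGroup G)
    (hNfix : ∀ σ ∈ Δ, ∀ v ∈ setNbhd G Z, σ v = v) {δ : Equiv.Perm V} (hδ : δ ∈ Δ)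
    (hδorb : ∀ v ∈ Z, ∀ n : ℕ, 0 < n → n ≤ h → (δ ^ n) v ≠ v)
    {T : G.Subgraph} (hT : T.Connected) (hTverts : T.verts ⊆ Z ∪ setNbhd G Z)
    (hN : ∀ v ∈ setNbhd G Z, ∃ w, T.neighborSet v = {w})
    (hTorb : ∀ v ∈ T.verts ∩ Z, ∀ w ∈ T.verts ∩ Z, (∃ σ ∈ Δ, σ v = w) → v = w)
    (hI : (T.verts ∩ Z).Nonempty) (hNbig : h + 1 ≤ (setNbhd G Z).ncard) :
    HasCompleteBipartiteMinor G (h + 1) := by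
  have hleaf : ∀ v ∈ T.verts, v ∉ Z → ∃ w, T.neighborSet v = {w} := fun v hv hvZ =>
    hN v ((hTverts hv).resolve_left hvZ)
  have hIconn := hT.connected_induce_verts_inter (fun v hv hvZ => by
    obtain ⟨w, hw⟩ := hleaf v hv hvZ
    exact hw ▸ Set.subsingleton_singleton) hI
  obtain ⟨ℓ, hℓ, hℓN⟩ := Set.exists_injective_fin_of_le_ncard hNbig
  have hfix (n : ℕ) (j : Fin (h + 1)) : (δ ^ n) (ℓ j) = ℓ j :=
    hNfix _ (pow_mem hδ n) _ (hℓN j)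
  refine hasCompleteBipartiteMinor_of_forall_adj (fun i => (δ ^ (i : ℕ)) '' (T.verts ∩ Z)) ℓ
    (fun i => hIconn.induce_image (homOfMemAutGroup (hΔ (pow_mem hδ i))))
    (Equiv.Perm.pairwise_disjoint_image_pow fun v hv n hn hnh hvn =>
      hδorb v hv.2 n hn hnh (hTorb _ hv _ hvn ⟨_, pow_mem hδ n, rfl⟩).symm) hℓ ?_ fun i j => ?_
  · rintro i j ⟨v, hv, hvℓ⟩
    rw [← hfix i j] at hvℓ
    exact (hℓN j).1 ((δ ^ (i : ℕ)).injective hvℓ ▸ hv.2)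
  · obtain ⟨w, hw⟩ := hN _ (hℓN j)
    have hadj := Subgraph.adj_of_neighborSet_eq_singleton hw
    have hwZ := hT.mem_of_neighborSet_eq_singleton hleaf hI (hℓN j).1 hw
    refine ⟨(δ ^ (i : ℕ)) w, ⟨w, ⟨hadj.snd_mem, hwZ⟩, rfl⟩, ?_⟩
    rw [← hfix i j]
    exact (homOfMemAutGroup (hΔ (pow_mem hδ i))).map_adj (T.adj_sub hadj.symm)

lemma hasCompleteBipartiteMinor_of_interior_eq_empty {h : ℕ} {Z : Set V}
    (hZconn : (G.induce Z).Connected) {δ : Equiv.Perm V} (hδ : δ ∈ autGroup G)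
    (hδZ : ∀ v ∈ Z, δ v ∈ Z) (hδN : ∀ v ∈ setNbhd G Z, δ v = v)
    (hδorb : ∀ v ∈ Z, ∀ n : ℕ, 0 < n → n ≤ h → (δ ^ n) v ≠ v)
    {T : G.Subgraph} (hT : T.Connected) (hTverts : T.verts ⊆ Z ∪ setNbhd G Z)
    (hN : ∀ v ∈ setNbhd G Z, ∃ w, T.neighborSet v = {w})
    (hI : T.verts ∩ Z = ∅) (hNbig : h + 1 ≤ (setNbhd G Z).ncard) :
    HasCompleteBipartiteMinor G (h + 1) := by
  have hTN : T.verts ⊆ setNbhd G Z := fun v hv =>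
    (hTverts hv).resolve_left fun hvZ => hI.subset ⟨hv, hvZ⟩
  obtain ⟨a, b, hab, hTab⟩ :=
    hT.exists_adj_verts_subset_pair fun v hv => hN v (hTN hv)
  have hNab : setNbhd G Z ⊆ {a, b} := fun v hv =>
    hTab (Subgraph.adj_of_neighborSet_eq_singleton (hN v hv).choose_spec).fst_mem
  have hN2 := (Set.ncard_le_ncard hNab).trans_eq (Set.ncard_pair (T.adj_sub hab).ne)
  obtain ⟨haZ, x, hx, hax⟩ := hTN hab.fst_mem
  obtain ⟨hbZ, y, hy, hby⟩ := hTN hab.snd_mem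
  obtain rfl | rfl : h = 0 ∨ h = 1 := by omega
  · exact hasCompleteBipartiteMinor_one_of_adj (T.adj_sub hab)
  by_cases hxy : x = y
  · subst hxy
    have haδx : G.Adj a (δ x) := hδN a (hTN hab.fst_mem) ▸ (homOfMemAutGroup hδ).map_adj hax
    exact hasCompleteBipartiteMinor_two_of_connected_induce hZconn haZ hbZ (hδZ x hx) hx
      (by simpa using hδorb x hx 1 one_pos le_rfl) (T.adj_sub hab) haδx hby
  · exact hasCompleteBipartiteMinor_two_of_connected_induce hZconn haZ hbZ hx hy hxy
      (T.adj_sub hab) hax hby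

end Minors

theorem stmt_16_general {V : Type*} (G : SimpleGraph V) (h : ℕ) (Z : Set V)
    (hZconn : (G.induce Z).Connected)
    (Δ : Subgroup (Equiv.Perm V)) (hΔ : Δ ≤ autGroup G)
    (hZset : ∀ σ ∈ Δ, ∀ v ∈ Z, σ v ∈ Z)
    (hNfix : ∀ σ ∈ Δ, ∀ v ∈ setNbhd G Z, σ v = v)
    (δ : Equiv.Perm V) (hδ : δ ∈ Δ)
    (hδorb : ∀ v ∈ Z, ∀ n : ℕ, 0 < n → n ≤ h → (δ ^ n) v ≠ v)
    (T : G.Subgraph)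
    (hTverts : T.verts ⊆ Z ∪ setNbhd G Z)
    (hTtree : T.coe.IsTree)
    (hTleaves : {v : V | v ∈ T.verts ∧ (T.neighborSet v).ncard = 1} = setNbhd G Z)
    (hTorb : ∀ v ∈ T.verts ∩ Z, ∀ w ∈ T.verts ∩ Z,
      (∃ σ ∈ Δ, σ v = w) → v = w)
    (hNbig : h + 1 ≤ (setNbhd G Z).ncard) :
    HasCompleteBipartiteMinor G (h + 1) ∧ HasCompleteMinor G (h + 1) := by
  suffices hbip : HasCompleteBipartiteMinor G (h + 1) from ⟨hbip, hbip.hasCompleteMinor⟩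
  have hT : T.Connected := ⟨hTtree.connected⟩
  have hN : ∀ v ∈ setNbhd G Z, ∃ w, T.neighborSet v = {w} := by
    rw [← hTleaves]
    exact fun v hv => Set.ncard_eq_one.1 hv.2
  rcases (T.verts ∩ Z).eq_empty_or_nonempty with hI | hI
  · exact hasCompleteBipartiteMinor_of_interior_eq_empty hZconn (hΔ hδ) (hZset δ hδ)
      (hNfix δ hδ) hδorb hT hTverts hN hI hNbig
  · exact hasCompleteBipartiteMinor_of_interior_nonempty hΔ hNfix hδ hδorb hT hTverts hN hTorb
      hI hNbig

/-- let `Z` be a component of `G − F` and `Δ ≤ Aut(G)` fix `Z` setwise,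
`N(Z)` pointwise and have no fixed point in `Z`, with some `δ ∈ Δ` all of whose orbits
on `Z` are longer than `h`.  If there is a tree in `G[Z ∪ N(Z)]` whose leaves are
exactly `N(Z)`, meeting each `Δ`-orbit on `Z` at most once, and `|N(Z)| ≥ h+1`, then
`G` has a `K_{h+1,h+1}` minor and hence a `K_{h+1}` minor. -/
theorem stmt_16 {V : Type*} [Fintype V] [DecidableEq V] (G : SimpleGraph V)
    (hconn : G.Connected) (h : ℕ)
    (F Z : Set V) (hZF : Disjoint Z F)
    (hZconn : (G.induce Z).Connected)
    (hZcomp : ∀ a ∈ Z, ∀ b : V, G.Adj a b → b ∈ Z ∪ F)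
    (hNZ : setNbhd G Z ⊆ F)
    (Δ : Subgroup (Equiv.Perm V)) (hΔ : Δ ≤ autGroup G)
    (hZset : ∀ σ ∈ Δ, ∀ v ∈ Z, σ v ∈ Z)
    (hNfix : ∀ σ ∈ Δ, ∀ v ∈ setNbhd G Z, σ v = v)
    (hnofix : ∀ v ∈ Z, ∃ σ ∈ Δ, σ v ≠ v)
    (δ : Equiv.Perm V) (hδ : δ ∈ Δ)
    (hδorb : ∀ v ∈ Z, ∀ n : ℕ, 0 < n → n ≤ h → (δ ^ n) v ≠ v)
    (T : G.Subgraph)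
    (hTverts : T.verts ⊆ Z ∪ setNbhd G Z)
    (hTtree : T.coe.IsTree)
    (hTleaves : {v : V | v ∈ T.verts ∧ (T.neighborSet v).ncard = 1} = setNbhd G Z)
    (hTorb : ∀ v ∈ T.verts ∩ Z, ∀ w ∈ T.verts ∩ Z,
      (∃ σ ∈ Δ, σ v = w) → v = w)
    (hNbig : h + 1 ≤ (setNbhd G Z).ncard) :
    HasCompleteBipartiteMinor G (h + 1) ∧ HasCompleteMinor G (h + 1) :=
  stmt_16_general G h Z hZconn Δ hΔ hZset hNfix δ hδ hδorb T hTverts hTtree hTleaves hTorb hNbig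
end
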